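/- For every integer ν ≥ 3, the function p ↦ 1/E_p, where E_p := (1/2) Σ_{μ=1}^{ν} (1 − cos p^{(μ)}), is integrable on [−π,π]^ν; in particular I_ν := (2π)^{−ν} ∫_{[−π,π]^ν} dp / E_p is finite. -/
import Mathlib

open MeasureTheory

noncomputable section

/-- The momentum cube `[-π, π]^ν`. -/
def cube (ν : ℕ) : Set (Fin ν → ℝ) :=
  Set.univ.pi fun _ : Fin ν => Set.Icc (-Real.pi) Real.pi

/-- The dispersion `E_p = (1/2) Σ_μ (1 - cos p⁽μ⁾)`. -/
def Efree (ν : ℕ) (p : Fin ν → ℝ) : ℝ := (1 / 2) * ∑ μ : Fin ν, (1 - Real.cos (p μ))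

section auxx

open MeasureTheory Real Set Metric ENNReal

lemma aux_inv_sq_norm_integrable (ν : ℕ) (hν : 3 ≤ ν) :
    IntegrableOn (fun p : Fin ν → ℝ => (‖p‖ ^ 2)⁻¹)
      (Metric.closedBall (0 : Fin ν → ℝ) π) volume := by
  haveI : Nonempty (Fin ν) := ⟨⟨0, by omega⟩⟩
  set B := Metric.closedBall (0 : Fin ν → ℝ) π
  have hmeas : Measurable (fun p : Fin ν → ℝ => (‖p‖ ^ 2)⁻¹) :=
    (measurable_norm.pow_const 2).inv
  refine ⟨hmeas.aestronglyMeasurable, ?_⟩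
  have hnn : 0 ≤ᵐ[volume.restrict B] fun p : Fin ν → ℝ => (‖p‖ ^ 2)⁻¹ :=
    Filter.Eventually.of_forall fun p => by positivity
  rw [hasFiniteIntegral_iff_ofReal hnn,
    lintegral_eq_lintegral_meas_le _ hnn hmeas.aemeasurable]
  have hfr : Module.finrank ℝ (Fin ν → ℝ) = ν := by simp
  calc
    ∫⁻ t in Ioi (0:ℝ), (volume.restrict B) {a | t ≤ (‖a‖ ^ 2)⁻¹}
        ≤ ∫⁻ t in Ioc (0:ℝ) 1 ∪ Ioi 1, (volume.restrict B) {a | t ≤ (‖a‖ ^ 2)⁻¹} :=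
      lintegral_mono_set Ioi_subset_Ioc_union_Ioi
    _ ≤ (∫⁻ t in Ioc (0:ℝ) 1, (volume.restrict B) {a | t ≤ (‖a‖ ^ 2)⁻¹}) +
        ∫⁻ t in Ioi (1:ℝ), (volume.restrict B) {a | t ≤ (‖a‖ ^ 2)⁻¹} :=
      lintegral_union_le _ _ _
    _ < ∞ := by
      refine ENNReal.add_lt_top.2 ⟨?_, ?_⟩
      · calc
          (∫⁻ t in Ioc (0:ℝ) 1, (volume.restrict B) {a | t ≤ (‖a‖ ^ 2)⁻¹})
              ≤ ∫⁻ _ in Ioc (0:ℝ) 1, volume B := by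
            refine lintegral_mono fun t => ?_
            calc (volume.restrict B) {a | t ≤ (‖a‖ ^ 2)⁻¹}
                ≤ (volume.restrict B) univ := measure_mono (subset_univ _)
              _ = volume B := Measure.restrict_apply_univ _
          _ < ∞ := by
            rw [setLIntegral_const]
            exact ENNReal.mul_lt_top measure_closedBall_lt_top (by simp)
      · have key : ∀ t ∈ Ioi (1:ℝ), (volume.restrict B) {a | t ≤ (‖a‖ ^ 2)⁻¹}
            ≤ ENNReal.ofReal (t ^ (-(ν:ℝ)/2)) * volume (ball (0 : Fin ν → ℝ) 1) := by
          intro t ht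
          have ht0 : (0:ℝ) < t := lt_trans one_pos ht
          have hsub : {a : Fin ν → ℝ | t ≤ (‖a‖ ^ 2)⁻¹}
              ⊆ Metric.closedBall 0 (Real.sqrt t⁻¹) := by
            intro a ha
            simp only [mem_setOf_eq] at ha
            have hane : ‖a‖ ^ 2 ≠ 0 := by
              intro h; rw [h] at ha; simp at ha; linarith
            have hpos : 0 < ‖a‖ ^ 2 := lt_of_le_of_ne (by positivity) (Ne.symm hane)
            have h2 : ‖a‖ ^ 2 ≤ t⁻¹ := by
              rw [← inv_inv (‖a‖ ^ 2)]
              exact inv_anti₀ ht0 ha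
            rw [mem_closedBall_zero_iff]
            calc ‖a‖ = Real.sqrt (‖a‖ ^ 2) := (Real.sqrt_sq (norm_nonneg a)).symm
              _ ≤ Real.sqrt t⁻¹ := Real.sqrt_le_sqrt h2
          calc
            (volume.restrict B) {a : Fin ν → ℝ | t ≤ (‖a‖ ^ 2)⁻¹}
                ≤ volume (Metric.closedBall (0 : Fin ν → ℝ) (Real.sqrt t⁻¹)) :=
              (Measure.restrict_apply_le _ _).trans (measure_mono hsub)
            _ = ENNReal.ofReal (Real.sqrt t⁻¹ ^ Module.finrank ℝ (Fin ν → ℝ))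
                  * volume (ball (0 : Fin ν → ℝ) 1) :=
              Measure.addHaar_closedBall _ _ (Real.sqrt_nonneg _)
            _ = ENNReal.ofReal (t ^ (-(ν:ℝ)/2)) * volume (ball (0 : Fin ν → ℝ) 1) := by
              congr 2
              rw [hfr, Real.sqrt_eq_rpow, ← Real.rpow_natCast (t⁻¹ ^ (1/2:ℝ)) ν,
                ← Real.rpow_mul (by positivity), ← Real.rpow_neg_one t,
                ← Real.rpow_mul ht0.le]
              congr 1
              ring
        calc
          ∫⁻ t in Ioi (1:ℝ), (volume.restrict B) {a | t ≤ (‖a‖ ^ 2)⁻¹}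
              ≤ ∫⁻ t in Ioi (1:ℝ),
                ENNReal.ofReal (t ^ (-(ν:ℝ)/2)) * volume (ball (0 : Fin ν → ℝ) 1) :=
            setLIntegral_mono' measurableSet_Ioi key
          _ = (∫⁻ t in Ioi (1:ℝ), ENNReal.ofReal (t ^ (-(ν:ℝ)/2)))
                * volume (ball (0 : Fin ν → ℝ) 1) :=
            lintegral_mul_const' _ _ measure_ball_lt_top.ne
          _ < ∞ := by
            refine ENNReal.mul_lt_top ?_ measure_ball_lt_top
            have h3 : (3:ℝ) ≤ (ν:ℝ) := by exact_mod_cast hν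
            have : -(ν:ℝ)/2 < -1 := by
              rw [div_lt_iff₀ (by norm_num : (0:ℝ) < 2)]
              linarith
            exact (integrableOn_Ioi_rpow_of_lt this one_pos).setLIntegral_lt_top

open Real Set Metric in
/-- Key pointwise estimate: on the cube, `‖p‖² ≤ π² * Efree ν p`. -/
lemma norm_sq_le_Efree {ν : ℕ} {p : Fin ν → ℝ} (hp : p ∈ cube ν) :
    ‖p‖ ^ 2 ≤ π ^ 2 * Efree ν p := by
  have hE0 : 0 ≤ Efree ν p := by
    have hsum : 0 ≤ ∑ μ : Fin ν, (1 - Real.cos (p μ)) :=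
      Finset.sum_nonneg fun μ _ => by have := Real.cos_le_one (p μ); linarith
    unfold Efree; linarith
  have hkey : ∀ i : Fin ν, (p i) ^ 2 ≤ π ^ 2 * Efree ν p := by
    intro i
    have hpi : |p i| ≤ π := by
      have := hp i (Set.mem_univ i)
      rw [abs_le]; exact ⟨this.1, this.2⟩
    have hcos : Real.cos (p i) ≤ 1 - 2 / π ^ 2 * (p i) ^ 2 :=
      Real.cos_le_one_sub_mul_cos_sq hpi
    have hsingle : 1 - Real.cos (p i) ≤ ∑ μ : Fin ν, (1 - Real.cos (p μ)) :=
      Finset.single_le_sum (f := fun μ => 1 - Real.cos (p μ))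
        (fun μ _ => by have := Real.cos_le_one (p μ); linarith) (Finset.mem_univ i)
    have hπ : (0:ℝ) < π ^ 2 := by positivity
    have h1 : 2 / π ^ 2 * (p i) ^ 2 ≤ 2 * Efree ν p := by
      unfold Efree; nlinarith
    calc (p i) ^ 2 = π ^ 2 / 2 * (2 / π ^ 2 * (p i) ^ 2) := by field_simp
      _ ≤ π ^ 2 / 2 * (2 * Efree ν p) := by
          apply mul_le_mul_of_nonneg_left h1; positivity
      _ = π ^ 2 * Efree ν p := by ring
  have hnorm : ‖p‖ ≤ Real.sqrt (π ^ 2 * Efree ν p) := by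
    rw [pi_norm_le_iff_of_nonneg (Real.sqrt_nonneg _)]
    intro i
    rw [Real.norm_eq_abs, ← Real.sqrt_sq_eq_abs]
    exact Real.sqrt_le_sqrt (hkey i)
  calc ‖p‖ ^ 2 ≤ Real.sqrt (π ^ 2 * Efree ν p) ^ 2 := by
        apply pow_le_pow_left₀ (norm_nonneg _) hnorm
    _ = π ^ 2 * Efree ν p := Real.sq_sqrt (by positivity)

end auxx

/-- For every `ν ≥ 3` the function `p ↦ 1/E_p` is (Lebesgue-)integrable on the cube
`[-π,π]^ν`; in particular `I_ν = (2π)^{-ν} ∫_{[-π,π]^ν} dp / E_p` is finite. -/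
theorem inv_Efree_integrable (ν : ℕ) (hν : 3 ≤ ν) :
    MeasureTheory.IntegrableOn (fun p : Fin ν → ℝ => (Efree ν p)⁻¹) (cube ν)
      MeasureTheory.volume := by
  have hcube_meas : MeasurableSet (cube ν) :=
    MeasurableSet.univ_pi fun _ => measurableSet_Icc
  have hcube_sub : cube ν ⊆ Metric.closedBall (0 : Fin ν → ℝ) Real.pi := by
    intro p hp
    rw [Metric.mem_closedBall, dist_zero_right,
      pi_norm_le_iff_of_nonneg Real.pi_nonneg]
    intro i
    have := hp i (Set.mem_univ i)
    rw [Real.norm_eq_abs, abs_le]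
    exact ⟨this.1, this.2⟩
  have hcont : Continuous (Efree ν) := by
    unfold Efree
    fun_prop
  have hbg : IntegrableOn (fun p : Fin ν → ℝ => Real.pi ^ 2 * (‖p‖ ^ 2)⁻¹) (cube ν) volume :=
    ((aux_inv_sq_norm_integrable ν hν).mono_set hcube_sub).const_mul _
  refine Integrable.mono' hbg (hcont.measurable.inv.aestronglyMeasurable.restrict) ?_
  refine (ae_restrict_iff' hcube_meas).2 (Filter.Eventually.of_forall fun p hp => ?_)
  have hE0 : 0 ≤ Efree ν p := by
    have hsum : 0 ≤ ∑ μ : Fin ν, (1 - Real.cos (p μ)) :=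
      Finset.sum_nonneg fun μ _ => by have := Real.cos_le_one (p μ); linarith
    unfold Efree; linarith
  rw [Real.norm_eq_abs, abs_of_nonneg (inv_nonneg.2 hE0)]
  rcases eq_or_ne p 0 with rfl | hp0
  · have : Efree ν 0 = 0 := by
      unfold Efree; simp
    simp [this]
  · have hn : 0 < ‖p‖ ^ 2 := by
      have : (0:ℝ) < ‖p‖ := norm_pos_iff.2 hp0
      positivity
    have hkey := norm_sq_le_Efree hp
    have hEpos : 0 < Efree ν p := by nlinarith [Real.pi_pos]
    rw [inv_le_iff_one_le_mul₀ hEpos]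
    calc (1:ℝ) = (‖p‖ ^ 2) * (‖p‖ ^ 2)⁻¹ := by field_simp
      _ ≤ (Real.pi ^ 2 * Efree ν p) * (‖p‖ ^ 2)⁻¹ := by
          apply mul_le_mul_of_nonneg_right (norm_sq_le_Efree hp) (by positivity)
      _ = Real.pi ^ 2 * (‖p‖ ^ 2)⁻¹ * Efree ν p := by ring

end
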